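/- arXiv:1408.0408 — 2 statements merged into one kernel-verified Lean document; each statement's English description precedes it below -/
import Mathlib

section
/- If G[U ∪ V] is a balanced bipartite graph with parts U and V each of order m, and every vertex has degree at least 3m/4, then G[U ∪ V] is bipanconnected: for every x ∈ U and y ∈ V there exist x–y paths of every odd length ℓ with 3 ≤ ℓ ≤ 2m−1, and for every pair x, y in the same part there exist x–y paths of every even length ℓ with 2 ≤ ℓ ≤ 2m−2. -/
/-!
Every vertex misses at most `q = ⌊m/4⌋` vertices of the opposite part. Paths of length 2 and 3
exist by counting common neighbours, and every path `P = P₀ … P_L` with `P₀ ∈ U` can be lengthened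
by two, keeping its endpoints, as long as both parts keep a vertex off `P`.

Suppose `P` cannot be lengthened, and let `u ∈ U`, `v ∈ W` be off `P`. Call `k` a hook of `(u, v)`
if `v ~ P₂ₖ` and `u ~ P₂ₖ₊₁`. If `u ~ v`, a hook gives the detour `P₂ₖ, v, u, P₂ₖ₊₁`; two hooks
`k < l` give the rotation `P₂ₖ, v, P₂ₗ, P₂ₗ₋₁, …, P₂ₖ₊₁, u, P₂ₗ₊₁`. So there are no hooks if
`u ~ v` and at most one otherwise, while all but the at most `2q` indices where `v` or `u` misses
`P` are hooks. Taking `u` adjacent to some `P₂ₖ₊₁`, its off-path neighbours in `W` all miss `P₂ₖ`,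
and counting the non-neighbours of `u` then gives `m ≤ 3q` or `m ≤ 2q + 1`, contradicting `4q ≤ m`.
-/

open Finset

namespace SimpleGraph

variable {V : Type*} {G : SimpleGraph V}

def HasPathOfLength (G : SimpleGraph V) (x y : V) (n : ℕ) : Prop :=
  ∃ w : G.Walk x y, w.IsPath ∧ w.length = n

theorem exists_walk_getVert_eq {p : ℕ → V} {n : ℕ} (hadj : ∀ i < n, G.Adj (p i) (p (i + 1))) :
    ∃ w : G.Walk (p 0) (p n), w.length = n ∧ ∀ i ≤ n, w.getVert i = p i := by
  induction n generalizing p with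
  | zero => exact ⟨.nil, rfl, fun i hi => by simp [Nat.le_zero.mp hi]⟩
  | succ n ih =>
    obtain ⟨w, hlen, hget⟩ := ih (p := fun i => p (i + 1)) fun i hi => hadj (i + 1) (by omega)
    refine ⟨.cons (hadj 0 (by omega)) w, by simp [hlen], fun i hi => ?_⟩
    rcases i with _ | i
    · rfl
    · exact hget i (by omega)

theorem hasPathOfLength_of_injOn {p : ℕ → V} {n : ℕ} (hadj : ∀ i < n, G.Adj (p i) (p (i + 1)))
    (hinj : Set.InjOn p {i | i ≤ n}) : G.HasPathOfLength (p 0) (p n) n := by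
  obtain ⟨w, hlen, hget⟩ := exists_walk_getVert_eq hadj
  refine ⟨w, (Walk.IsPath.getVert_injOn_iff w).mp ?_, hlen⟩
  rw [hlen]
  exact hinj.congr fun i hi => (hget i hi).symm

namespace Walk

variable {x y a b : V} {w : G.Walk x y}

theorem IsPath.injOn_splice (hw : w.IsPath) {σ : ℕ → ℕ} {n i₁ i₂ : ℕ} (hab : a ≠ b)
    (ha : a ∉ w.support) (hb : b ∉ w.support) (hσ : ∀ t ≤ n, σ t ≤ w.length)
    (hσinj : ∀ s ≤ n, ∀ t ≤ n, s ≠ i₁ → s ≠ i₂ → t ≠ i₁ → t ≠ i₂ → σ s = σ t → s = t) :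
    Set.InjOn (fun t => if t = i₁ then a else if t = i₂ then b else w.getVert (σ t))
      {t | t ≤ n} := by
  have ha' (i : ℕ) : w.getVert i ≠ a := fun h => ha (h ▸ w.getVert_mem_support i)
  have hb' (i : ℕ) : w.getVert i ≠ b := fun h => hb (h ▸ w.getVert_mem_support i)
  intro s (hs : s ≤ n) t (ht : t ≤ n) hst
  dsimp only at hst
  split_ifs at hst
  all_goals first
    | subst_vars; rfl
    | exact absurd hst hab
    | exact absurd hst.symm hab
    | exact absurd hst.symm (ha' _)
    | exact absurd hst.symm (hb' _)
    | exact absurd hst (ha' _)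
    | exact absurd hst (hb' _)
    | exact hσinj s hs t ht ‹_› ‹_› ‹_› ‹_› (hw.getVert_injOn (hσ s hs) (hσ t ht) hst)

theorem IsPath.hasPathOfLength_add_two_of_detour (hw : w.IsPath) {k : ℕ} (hk : k < w.length)
    (hab : a ≠ b) (ha : a ∉ w.support) (hb : b ∉ w.support)
    (h₁ : G.Adj (w.getVert k) a) (h₂ : G.Adj a b) (h₃ : G.Adj b (w.getVert (k + 1))) :
    G.HasPathOfLength x y (w.length + 2) := by
  let σ : ℕ → ℕ := fun t => if t ≤ k then t else t - 2
  let f : ℕ → V := fun t => if t = k + 1 then a else if t = k + 2 then b else w.getVert (σ t)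
  have hadj : ∀ t < w.length + 2, G.Adj (f t) (f (t + 1)) := by
    intro t ht
    obtain h | rfl | rfl | rfl | h : t < k ∨ t = k ∨ t = k + 1 ∨ t = k + 2 ∨ k + 2 < t := by
      omega
    · simp (disch := omega) only [f, σ, if_pos, if_neg]
      exact w.adj_getVert_succ (by omega)
    · simpa [f, σ] using h₁
    · simpa [f] using h₂
    · simpa [f, σ] using h₃
    · simp (disch := omega) only [f, σ, if_neg]
      rw [show t + 1 - 2 = t - 2 + 1 by omega]
      exact w.adj_getVert_succ (by omega)
  have hinj : Set.InjOn f {t | t ≤ w.length + 2} :=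
    hw.injOn_splice hab ha hb (fun t ht => by simp only [σ]; split_ifs <;> omega)
      (fun s _ t _ _ _ _ _ hst => by simp only [σ] at hst; split_ifs at hst <;> omega)
  have := hasPathOfLength_of_injOn hadj hinj
  simp (disch := omega) only [f, σ, if_pos, if_neg] at this
  simpa [show w.length + 2 - 2 = w.length by omega] using this

theorem IsPath.hasPathOfLength_add_two_of_rotation (hw : w.IsPath) {i j : ℕ} (hij : i < j)
    (hj : j < w.length) (hab : a ≠ b) (ha : a ∉ w.support) (hb : b ∉ w.support)
    (h₁ : G.Adj (w.getVert i) a) (h₂ : G.Adj a (w.getVert j))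
    (h₃ : G.Adj (w.getVert (i + 1)) b) (h₄ : G.Adj b (w.getVert (j + 1))) :
    G.HasPathOfLength x y (w.length + 2) := by
  -- `f` lists `w₀, …, wᵢ, a, wⱼ, wⱼ₋₁, …, wᵢ₊₁, b, wⱼ₊₁, …`
  let σ : ℕ → ℕ := fun t => if t ≤ i then t else if t ≤ j + 1 then i + j + 2 - t else t - 2
  let f : ℕ → V := fun t => if t = i + 1 then a else if t = j + 2 then b else w.getVert (σ t)
  have hadj : ∀ t < w.length + 2, G.Adj (f t) (f (t + 1)) := by
    intro t ht
    obtain h | rfl | rfl | h | rfl | rfl | h :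
        t < i ∨ t = i ∨ t = i + 1 ∨ (i + 1 < t ∧ t ≤ j) ∨ t = j + 1 ∨ t = j + 2 ∨ j + 2 < t := by
      omega
    · simp (disch := omega) only [f, σ, if_pos, if_neg]
      exact w.adj_getVert_succ (by omega)
    · simpa (disch := omega) only [f, σ, if_pos, if_neg] using h₁
    · simpa (disch := omega) only [f, σ, if_pos, if_neg, show i + j + 2 - (i + 1 + 1) = j by omega]
        using h₂
    · simp (disch := omega) only [f, σ, if_pos, if_neg]
      rw [show i + j + 2 - t = i + j + 2 - (t + 1) + 1 by omega]
      exact (w.adj_getVert_succ (by omega)).symm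
    · simpa (disch := omega) only [f, σ, if_pos, if_neg, reduceIte,
        show i + j + 2 - (j + 1) = i + 1 by omega] using h₃
    · simpa (disch := omega) only [f, σ, if_pos, if_neg, reduceIte,
        show j + 2 + 1 - 2 = j + 1 by omega] using h₄
    · simp (disch := omega) only [f, σ, if_neg]
      rw [show t + 1 - 2 = t - 2 + 1 by omega]
      exact w.adj_getVert_succ (by omega)
  have hinj : Set.InjOn f {t | t ≤ w.length + 2} :=
    hw.injOn_splice hab ha hb (fun t ht => by simp only [σ]; split_ifs <;> omega)
      (fun s _ t _ _ _ _ _ hst => by simp only [σ] at hst; split_ifs at hst <;> omega)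
  have := hasPathOfLength_of_injOn hadj hinj
  simp (disch := omega) only [f, σ, if_pos, if_neg] at this
  simpa [show w.length + 2 - 2 = w.length by omega] using this

theorem IsPath.injOn_getVert_two_mul (hw : w.IsPath) :
    Set.InjOn (fun k => w.getVert (2 * k)) (range (w.length / 2 + 1)) := by
  intro k (hk : k ∈ range _) l (hl : l ∈ range _) h
  rw [mem_range] at hk hl
  have := hw.getVert_injOn (by omega : 2 * k ≤ w.length) (by omega : 2 * l ≤ w.length) h
  omega

theorem IsPath.injOn_getVert_two_mul_add_one (hw : w.IsPath) :
    Set.InjOn (fun k => w.getVert (2 * k + 1)) (range ((w.length + 1) / 2)) := by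
  intro k (hk : k ∈ range _) l (hl : l ∈ range _) h
  rw [mem_range] at hk hl
  have := hw.getVert_injOn (by omega : 2 * k + 1 ≤ w.length) (by omega : 2 * l + 1 ≤ w.length) h
  omega

variable [DecidableEq V]

def evenVerts (w : G.Walk x y) : Finset V :=
  (range (w.length / 2 + 1)).image fun k => w.getVert (2 * k)

def oddVerts (w : G.Walk x y) : Finset V :=
  (range ((w.length + 1) / 2)).image fun k => w.getVert (2 * k + 1)

theorem IsPath.card_evenVerts (hw : w.IsPath) : #w.evenVerts = w.length / 2 + 1 := by
  rw [evenVerts, card_image_of_injOn hw.injOn_getVert_two_mul, card_range]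

theorem IsPath.card_oddVerts (hw : w.IsPath) : #w.oddVerts = (w.length + 1) / 2 := by
  rw [oddVerts, card_image_of_injOn hw.injOn_getVert_two_mul_add_one, card_range]

variable [DecidableRel G.Adj]

def hooks (w : G.Walk x y) (u v : V) : Finset ℕ :=
  {k ∈ range ((w.length + 1) / 2) | G.Adj v (w.getVert (2 * k)) ∧ G.Adj u (w.getVert (2 * k + 1))}

theorem IsPath.half_length_le_card_hooks_add (hw : w.IsPath) (u v : V) :
    (w.length + 1) / 2 ≤
      #(w.hooks u v) + #{z ∈ w.evenVerts | ¬ G.Adj v z} + #{z ∈ w.oddVerts | ¬ G.Adj u z} := by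
  rw [hooks]
  set b := (w.length + 1) / 2
  have hsplit := card_filter_add_card_filter_not (s := range b)
    fun k => G.Adj v (w.getVert (2 * k)) ∧ G.Adj u (w.getVert (2 * k + 1))
  have hbad : #{k ∈ range b | ¬ (G.Adj v (w.getVert (2 * k)) ∧ G.Adj u (w.getVert (2 * k + 1)))}
      ≤ #{k ∈ range b | ¬ G.Adj v (w.getVert (2 * k))} +
        #{k ∈ range b | ¬ G.Adj u (w.getVert (2 * k + 1))} := by
    simp only [not_and_or, filter_or]
    exact card_union_le _ _
  have heven : #{k ∈ range b | ¬ G.Adj v (w.getVert (2 * k))} ≤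
      #{z ∈ w.evenVerts | ¬ G.Adj v z} := by
    rw [evenVerts, filter_image,
      card_image_of_injOn (hw.injOn_getVert_two_mul.mono (coe_subset.2 (filter_subset _ _)))]
    exact card_le_card (filter_subset_filter _ (range_subset_range.2 (by omega)))
  have hodd : #{k ∈ range b | ¬ G.Adj u (w.getVert (2 * k + 1))} ≤
      #{z ∈ w.oddVerts | ¬ G.Adj u z} := by
    rw [oddVerts, filter_image, card_image_of_injOn
      (hw.injOn_getVert_two_mul_add_one.mono (coe_subset.2 (filter_subset _ _)))]
  rw [card_range] at hsplit
  omega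

end Walk

variable [DecidableRel G.Adj]

structure IsDenseBipartite (G : SimpleGraph V) [DecidableRel G.Adj] (U W : Finset V) (m q : ℕ) :
    Prop where
  disjoint : Disjoint U W
  card_left : #U = m
  card_right : #W = m
  mem_of_adj : ∀ a b, G.Adj a b → a ∈ U ∧ b ∈ W ∨ a ∈ W ∧ b ∈ U
  card_nonadj_left_le : ∀ u ∈ U, #{v ∈ W | ¬ G.Adj u v} ≤ q
  card_nonadj_right_le : ∀ v ∈ W, #{u ∈ U | ¬ G.Adj v u} ≤ q

namespace IsDenseBipartite

variable {U W : Finset V} {m q : ℕ} {x y u v : V}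

theorem of_le_degree [Fintype V] (hdisj : Disjoint U W) (hU : #U = m) (hW : #W = m)
    (hbip : ∀ a b, G.Adj a b → a ∈ U ∧ b ∈ W ∨ a ∈ W ∧ b ∈ U) (hdeg : ∀ v, m ≤ G.degree v + q) :
    IsDenseBipartite G U W m q := by
  have hnonadj {s t : Finset V} (hst : Disjoint s t) (ht : #t = m)
      (hbip : ∀ a b, G.Adj a b → a ∈ s ∧ b ∈ t ∨ a ∈ t ∧ b ∈ s) (u : V) (hu : u ∈ s) :
      #{v ∈ t | ¬ G.Adj u v} ≤ q := by
    have hnbr : {v ∈ t | G.Adj u v} = G.neighborFinset u := by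
      ext v
      simp only [mem_filter, mem_neighborFinset, and_iff_right_iff_imp]
      intro h
      exact ((hbip u v h).resolve_right fun h' => Finset.disjoint_left.mp hst hu h'.1).2
    have := card_filter_add_card_filter_not (s := t) (G.Adj u)
    rw [hnbr, card_neighborFinset_eq_degree, ht] at this
    have := hdeg u
    omega
  exact ⟨hdisj, hU, hW, hbip, hnonadj hdisj hW hbip,
    hnonadj hdisj.symm hU fun a b h => (hbip a b h).symm⟩

theorem symm (S : IsDenseBipartite G U W m q) : IsDenseBipartite G W U m q where
  disjoint := S.disjoint.symm
  card_left := S.card_right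
  card_right := S.card_left
  mem_of_adj a b h := (S.mem_of_adj a b h).symm
  card_nonadj_left_le := S.card_nonadj_right_le
  card_nonadj_right_le := S.card_nonadj_left_le

theorem ne_of_mem (S : IsDenseBipartite G U W m q) (hu : u ∈ U) (hv : v ∈ W) : u ≠ v :=
  fun h => Finset.disjoint_left.mp S.disjoint hu (h ▸ hv)

theorem mem_right_of_adj (S : IsDenseBipartite G U W m q) (hu : u ∈ U) (h : G.Adj u v) : v ∈ W :=
  ((S.mem_of_adj u v h).resolve_right fun h' => S.ne_of_mem hu h'.1 rfl).2

theorem mem_left_of_adj (S : IsDenseBipartite G U W m q) (hv : v ∈ W) (h : G.Adj v u) : u ∈ U :=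
  S.symm.mem_right_of_adj hv h

theorem getVert_mem (S : IsDenseBipartite G U W m q) (hx : x ∈ U) (w : G.Walk x y) (k : ℕ) :
    (2 * k ≤ w.length → w.getVert (2 * k) ∈ U) ∧
      (2 * k + 1 ≤ w.length → w.getVert (2 * k + 1) ∈ W) := by
  have step (k : ℕ) (hk : 2 * k ≤ w.length → w.getVert (2 * k) ∈ U) :
      2 * k + 1 ≤ w.length → w.getVert (2 * k + 1) ∈ W :=
    fun h => S.mem_right_of_adj (hk (by omega)) (w.adj_getVert_succ (by omega))
  induction k with
  | zero => exact ⟨fun _ => by simpa using hx, step 0 fun _ => by simpa using hx⟩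
  | succ k ih =>
    have heven : 2 * (k + 1) ≤ w.length → w.getVert (2 * (k + 1)) ∈ U :=
      fun h => S.mem_left_of_adj (ih.2 (by omega)) (w.adj_getVert_succ (by omega))
    exact ⟨heven, step (k + 1) heven⟩

variable [DecidableEq V]

theorem exists_common_neighbor (S : IsDenseBipartite G U W m q) (F : Finset V)
    (h : 2 * q + #F < m) (hu : u ∈ U) (hv : v ∈ U) : ∃ z ∈ W, z ∉ F ∧ G.Adj u z ∧ G.Adj v z := by
  by_contra! hcon
  have hW : W ⊆ F ∪ {z ∈ W | ¬ G.Adj u z} ∪ {z ∈ W | ¬ G.Adj v z} := by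
    intro z hz
    have := hcon z hz
    simp only [mem_union, mem_filter]
    tauto
  have := (card_le_card hW).trans (card_union_le _ _)
  have := card_union_le F {z ∈ W | ¬ G.Adj u z}
  have := S.card_nonadj_left_le u hu
  have := S.card_nonadj_left_le v hv
  rw [S.card_right] at *
  omega

theorem hasPathOfLength_two (S : IsDenseBipartite G U W m q) (h : 2 * q < m) (hx : x ∈ U)
    (hy : y ∈ U) (hxy : x ≠ y) : G.HasPathOfLength x y 2 := by
  obtain ⟨z, -, -, hxz, hyz⟩ := S.exists_common_neighbor ∅ (by simpa using h) hx hy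
  exact ⟨.cons hxz (.cons hyz.symm .nil), by simp [hxy, hxz.ne, hyz.ne'], rfl⟩

theorem hasPathOfLength_three (S : IsDenseBipartite G U W m q) (h : 2 * q + 1 < m) (hx : x ∈ U)
    (hy : y ∈ W) : G.HasPathOfLength x y 3 := by
  obtain ⟨u, hu, hux, hyu, -⟩ := S.symm.exists_common_neighbor {x} (by simpa using h) hy hy
  obtain ⟨z, hz, hzy, hxz, huz⟩ := S.exists_common_neighbor {y} (by simpa using h) hx hu
  refine ⟨.cons hxz (.cons huz.symm (.cons hyu.symm .nil)), ?_, rfl⟩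
  simp only [mem_singleton] at hux hzy
  simp [hxz.ne, Ne.symm hux, S.ne_of_mem hx hy, huz.ne', hzy, S.ne_of_mem hu hy]

variable {w : G.Walk x y}

theorem evenVerts_subset (S : IsDenseBipartite G U W m q) (hx : x ∈ U) : w.evenVerts ⊆ U := by
  intro z hz
  obtain ⟨k, hk, rfl⟩ := mem_image.mp hz
  exact (S.getVert_mem hx w k).1 (by rw [mem_range] at hk; omega)

theorem oddVerts_subset (S : IsDenseBipartite G U W m q) (hx : x ∈ U) : w.oddVerts ⊆ W := by
  intro z hz
  obtain ⟨k, hk, rfl⟩ := mem_image.mp hz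
  exact (S.getVert_mem hx w k).2 (by rw [mem_range] at hk; omega)

theorem notMem_support_of_mem_sdiff_evenVerts (S : IsDenseBipartite G U W m q) (hx : x ∈ U)
    (hu : u ∈ U \ w.evenVerts) : u ∉ w.support := by
  rw [Walk.mem_support_iff_exists_getVert]
  rintro ⟨i, rfl, hi⟩
  obtain ⟨k, rfl | rfl⟩ := Nat.even_or_odd' i
  · exact (mem_sdiff.mp hu).2 (mem_image.mpr ⟨k, mem_range.mpr (by omega), rfl⟩)
  · exact S.ne_of_mem (mem_sdiff.mp hu).1 ((S.getVert_mem hx w k).2 hi) rfl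

theorem notMem_support_of_mem_sdiff_oddVerts (S : IsDenseBipartite G U W m q) (hx : x ∈ U)
    (hv : v ∈ W \ w.oddVerts) : v ∉ w.support := by
  rw [Walk.mem_support_iff_exists_getVert]
  rintro ⟨i, rfl, hi⟩
  obtain ⟨k, rfl | rfl⟩ := Nat.even_or_odd' i
  · exact S.ne_of_mem ((S.getVert_mem hx w k).1 hi) (mem_sdiff.mp hv).1 rfl
  · exact (mem_sdiff.mp hv).2 (mem_image.mpr ⟨k, mem_range.mpr (by omega), rfl⟩)

theorem card_filter_evenVerts_add_card_filter_sdiff_le (S : IsDenseBipartite G U W m q)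
    (hx : x ∈ U) (hv : v ∈ W) :
    #{z ∈ w.evenVerts | ¬ G.Adj v z} + #{z ∈ U \ w.evenVerts | ¬ G.Adj v z} ≤ q := by
  rw [← card_union_of_disjoint (disjoint_filter_filter disjoint_sdiff), ← filter_union,
    union_sdiff_of_subset (S.evenVerts_subset hx)]
  exact S.card_nonadj_right_le v hv

theorem card_filter_oddVerts_add_card_filter_sdiff_le (S : IsDenseBipartite G U W m q)
    (hx : x ∈ U) (hu : u ∈ U) :
    #{z ∈ w.oddVerts | ¬ G.Adj u z} + #{z ∈ W \ w.oddVerts | ¬ G.Adj u z} ≤ q := by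
  rw [← card_union_of_disjoint (disjoint_filter_filter disjoint_sdiff), ← filter_union,
    union_sdiff_of_subset (S.oddVerts_subset hx)]
  exact S.card_nonadj_left_le u hu

theorem hooks_eq_empty (S : IsDenseBipartite G U W m q) (hx : x ∈ U) (hw : w.IsPath)
    (hmax : ¬ G.HasPathOfLength x y (w.length + 2)) (hu : u ∈ U \ w.evenVerts)
    (hv : v ∈ W \ w.oddVerts) (huv : G.Adj u v) : w.hooks u v = ∅ := by
  refine eq_empty_of_forall_notMem fun k hk => hmax ?_
  simp only [Walk.hooks, mem_filter, mem_range] at hk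
  exact hw.hasPathOfLength_add_two_of_detour (k := 2 * k) (by omega)
    (S.ne_of_mem (mem_sdiff.mp hu).1 (mem_sdiff.mp hv).1).symm
    (S.notMem_support_of_mem_sdiff_oddVerts hx hv) (S.notMem_support_of_mem_sdiff_evenVerts hx hu)
    hk.2.1.symm huv.symm hk.2.2

theorem card_hooks_le_one (S : IsDenseBipartite G U W m q) (hx : x ∈ U) (hw : w.IsPath)
    (hmax : ¬ G.HasPathOfLength x y (w.length + 2)) (hu : u ∈ U \ w.evenVerts)
    (hv : v ∈ W \ w.oddVerts) : #(w.hooks u v) ≤ 1 := by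
  have hlt : ∀ k ∈ w.hooks u v, ∀ l ∈ w.hooks u v, ¬ k < l := by
    intro k hk l hl hkl
    simp only [Walk.hooks, mem_filter, mem_range] at hk hl
    exact hmax <| hw.hasPathOfLength_add_two_of_rotation (i := 2 * k) (j := 2 * l) (by omega)
      (by omega) (S.ne_of_mem (mem_sdiff.mp hu).1 (mem_sdiff.mp hv).1).symm
      (S.notMem_support_of_mem_sdiff_oddVerts hx hv) (S.notMem_support_of_mem_sdiff_evenVerts hx hu)
      hk.2.1.symm hl.2.1 hk.2.2.symm hl.2.2
  exact card_le_one.mpr fun k hk l hl =>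
    le_antisymm (not_lt.mp (hlt l hl k hk)) (not_lt.mp (hlt k hk l hl))

theorem exists_adj_getVert_odd (S : IsDenseBipartite G U W m q) (hq : 4 * q ≤ m) (hx : x ∈ U)
    (hw : w.IsPath) (h₁ : 1 ≤ w.length) (h₂ : w.length + 3 ≤ 2 * m) :
    ∃ u ∈ U \ w.evenVerts, ∃ k < (w.length + 1) / 2, G.Adj u (w.getVert (2 * k + 1)) := by
  by_contra! hcon
  have hX : #(U \ w.evenVerts) = m - (w.length / 2 + 1) := by
    rw [card_sdiff_of_subset (S.evenVerts_subset hx), S.card_left, hw.card_evenVerts]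
  obtain ⟨u, hu⟩ : (U \ w.evenVerts).Nonempty := card_pos.mp (by omega)
  have hX_nonadj : U \ w.evenVerts ⊆ {z ∈ U | ¬ G.Adj (w.getVert 1) z} := fun z hz =>
    mem_filter.mpr ⟨(mem_sdiff.mp hz).1, fun h => hcon z hz 0 (by omega) h.symm⟩
  have hodd_nonadj : w.oddVerts ⊆ {z ∈ W | ¬ G.Adj u z} := by
    intro z hz
    obtain ⟨k, hk, rfl⟩ := mem_image.mp hz
    exact mem_filter.mpr ⟨S.oddVerts_subset hx hz, hcon u hu k (mem_range.mp hk)⟩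
  have := (card_le_card hX_nonadj).trans
    (S.card_nonadj_right_le _ ((S.getVert_mem hx w 0).2 (by omega)))
  have := (card_le_card hodd_nonadj).trans (S.card_nonadj_left_le u (mem_sdiff.mp hu).1)
  rw [hw.card_oddVerts] at this
  omega

theorem hasPathOfLength_add_two (S : IsDenseBipartite G U W m q) (hq : 4 * q ≤ m) (hx : x ∈ U)
    (hw : w.IsPath) (h₁ : 1 ≤ w.length) (h₂ : w.length + 3 ≤ 2 * m) :
    G.HasPathOfLength x y (w.length + 2) := by
  by_contra hmax
  obtain ⟨u, hu, k, hk, huk⟩ := S.exists_adj_getVert_odd hq hx hw h₁ h₂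
  have hY : #(W \ w.oddVerts) = m - (w.length + 1) / 2 := by
    rw [card_sdiff_of_subset (S.oddVerts_subset hx), S.card_right, hw.card_oddVerts]
  have hsplit := card_filter_add_card_filter_not (s := W \ w.oddVerts) fun z => G.Adj u z
  have hbudget := S.card_filter_oddVerts_add_card_filter_sdiff_le (w := w) hx (mem_sdiff.mp hu).1
  have hcount (v : V) (hv : v ∈ W \ w.oddVerts) :
      (w.length + 1) / 2 ≤ #(w.hooks u v) + q + #{z ∈ w.oddVerts | ¬ G.Adj u z} := by
    have := hw.half_length_le_card_hooks_add u v
    have := S.card_filter_evenVerts_add_card_filter_sdiff_le (w := w) hx (mem_sdiff.mp hv).1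
    omega
  by_cases hadj : ∃ v ∈ W \ w.oddVerts, G.Adj u v
  · obtain ⟨v, hv, huv⟩ := hadj
    -- a neighbour `z` of `u` adjacent to `w.getVert (2k)` would make `k` a hook of `(u, z)`
    have hT : #{z ∈ W \ w.oddVerts | G.Adj u z} ≤ q := by
      refine (card_le_card fun z hz => ?_).trans
        (S.card_nonadj_left_le _ ((S.getVert_mem hx w k).1 (by omega)))
      rw [mem_filter] at hz ⊢
      refine ⟨(mem_sdiff.mp hz.1).1, fun hkz => ?_⟩
      have hk_mem : k ∈ w.hooks u z := mem_filter.mpr ⟨mem_range.mpr hk, hkz.symm, huk⟩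
      simp [S.hooks_eq_empty hx hw hmax hu hz.1 hz.2] at hk_mem
    have := hcount v hv
    rw [S.hooks_eq_empty hx hw hmax hu hv huv, card_empty] at this
    omega
  · simp only [not_exists, not_and] at hadj
    have hT : #{z ∈ W \ w.oddVerts | G.Adj u z} = 0 :=
      card_eq_zero.mpr (filter_eq_empty_iff.mpr fun z hz => hadj z hz)
    obtain ⟨v, hv⟩ : (W \ w.oddVerts).Nonempty := card_pos.mp (by omega)
    have := hcount v hv
    have := S.card_hooks_le_one hx hw hmax hu hv
    omega

theorem hasPathOfLength_add_two_mul (S : IsDenseBipartite G U W m q) (hq : 4 * q ≤ m) (hx : x ∈ U)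
    {L : ℕ} (h : G.HasPathOfLength x y L) (hL : 1 ≤ L) (n : ℕ) (hn : L + 2 * n + 1 ≤ 2 * m) :
    G.HasPathOfLength x y (L + 2 * n) := by
  induction n with
  | zero => exact h
  | succ n ih =>
    obtain ⟨w, hw, hlen⟩ := ih (by omega)
    have := S.hasPathOfLength_add_two hq hx hw (by omega) (by omega)
    rwa [hlen] at this

theorem hasPathOfLength_of_odd (S : IsDenseBipartite G U W m q) (hq : 4 * q ≤ m) (hx : x ∈ U)
    (hy : y ∈ W) {ℓ : ℕ} (hodd : Odd ℓ) (h₃ : 3 ≤ ℓ) (hℓ : ℓ ≤ 2 * m - 1) :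
    G.HasPathOfLength x y ℓ := by
  obtain ⟨n, rfl⟩ : ∃ n, ℓ = 3 + 2 * n := by
    obtain ⟨k, rfl⟩ := hodd
    exact ⟨k - 1, by omega⟩
  exact S.hasPathOfLength_add_two_mul hq hx (S.hasPathOfLength_three (by omega) hx hy) (by omega) n
    (by omega)

theorem hasPathOfLength_of_even (S : IsDenseBipartite G U W m q) (hq : 4 * q ≤ m) (hx : x ∈ U)
    (hy : y ∈ U) (hxy : x ≠ y) {ℓ : ℕ} (heven : Even ℓ) (h₂ : 2 ≤ ℓ) (hℓ : ℓ ≤ 2 * m - 2) :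
    G.HasPathOfLength x y ℓ := by
  obtain ⟨n, rfl⟩ : ∃ n, ℓ = 2 + 2 * n := by
    obtain ⟨k, rfl⟩ := heven
    exact ⟨k - 1, by omega⟩
  exact S.hasPathOfLength_add_two_mul hq hx (S.hasPathOfLength_two (by omega) hx hy hxy) (by omega)
    n (by omega)

end IsDenseBipartite

end SimpleGraph

theorem balanced_bipartite_bipanconnected_general {V : Type*} [Fintype V] [DecidableEq V]
    (G : SimpleGraph V) [DecidableRel G.Adj] (U W : Finset V) (m : ℕ)
    (hdisj : Disjoint U W)
    (hU : U.card = m) (hW : W.card = m)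
    (hbip : ∀ a b : V, G.Adj a b → (a ∈ U ∧ b ∈ W) ∨ (a ∈ W ∧ b ∈ U))
    (hdeg : ∀ v : V, 3 * m ≤ 4 * G.degree v) :
    (∀ x ∈ U, ∀ y ∈ W, ∀ ℓ : ℕ, Odd ℓ → 3 ≤ ℓ → ℓ ≤ 2 * m - 1 →
        ∃ p : G.Walk x y, p.IsPath ∧ p.length = ℓ) ∧
    (∀ x ∈ U, ∀ y ∈ U, x ≠ y → ∀ ℓ : ℕ, Even ℓ → 2 ≤ ℓ → ℓ ≤ 2 * m - 2 →
        ∃ p : G.Walk x y, p.IsPath ∧ p.length = ℓ) ∧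
    (∀ x ∈ W, ∀ y ∈ W, x ≠ y → ∀ ℓ : ℕ, Even ℓ → 2 ≤ ℓ → ℓ ≤ 2 * m - 2 →
        ∃ p : G.Walk x y, p.IsPath ∧ p.length = ℓ) := by
  have S : G.IsDenseBipartite U W m (m / 4) :=
    .of_le_degree hdisj hU hW hbip fun v => by have := hdeg v; omega
  have hq : 4 * (m / 4) ≤ m := Nat.mul_div_le m 4
  exact ⟨fun x hx y hy _ => S.hasPathOfLength_of_odd hq hx hy,
    fun x hx y hy hxy _ => S.hasPathOfLength_of_even hq hx hy hxy,
    fun x hx y hy hxy _ => S.symm.hasPathOfLength_of_even hq hx hy hxy⟩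

/-- A balanced bipartite graph with parts of order `m` and minimum degree at
least `3m/4` is bipanconnected. -/
theorem balanced_bipartite_bipanconnected {V : Type*} [Fintype V] [DecidableEq V]
    (G : SimpleGraph V) [DecidableRel G.Adj] (U W : Finset V) (m : ℕ)
    (hdisj : Disjoint U W) (hcover : U ∪ W = Finset.univ)
    (hU : U.card = m) (hW : W.card = m)
    (hbip : ∀ a b : V, G.Adj a b → (a ∈ U ∧ b ∈ W) ∨ (a ∈ W ∧ b ∈ U))
    (hdeg : ∀ v : V, 3 * m ≤ 4 * G.degree v) :
    (∀ x ∈ U, ∀ y ∈ W, ∀ ℓ : ℕ, Odd ℓ → 3 ≤ ℓ → ℓ ≤ 2 * m - 1 →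
        ∃ p : G.Walk x y, p.IsPath ∧ p.length = ℓ) ∧
    (∀ x ∈ U, ∀ y ∈ U, x ≠ y → ∀ ℓ : ℕ, Even ℓ → 2 ≤ ℓ → ℓ ≤ 2 * m - 2 →
        ∃ p : G.Walk x y, p.IsPath ∧ p.length = ℓ) ∧
    (∀ x ∈ W, ∀ y ∈ W, x ≠ y → ∀ ℓ : ℕ, Even ℓ → 2 ≤ ℓ → ℓ ≤ 2 * m - 2 →
        ∃ p : G.Walk x y, p.IsPath ∧ p.length = ℓ) :=
  balanced_bipartite_bipanconnected_general G U W m hdisj hU hW hbip hdeg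
end

section
/- Let k be a positive integer and G a graph of order n with σ₂(G) ≥ n + k − 1 and δ(G) ≤ n_k/8 where n_k ≤ n. Let a be a vertex of degree δ(G) and B = V(G) \ ({a} ∪ N(a)). Then every induced subgraph of G[B] on at least 3n_k/8 vertices is panconnected. -/
/-!
A vertex `x ∈ B` is not adjacent to `a`, so `σ₂` gives `deg x + δ ≥ n`: `x` has fewer than `δ`
non-neighbours in the whole graph. Hence in any `S ⊆ B` with `|S| ≥ 3δ` every vertex misses fewer
than `d = δ` vertices of `S` while `|S| ≥ 3d`, and this density condition alone (a weak form of
Williamson's theorem) makes `S` panconnected. Length `2` comes from a common neighbour. A `u`–`v`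
path `P` in `S` that does not yet cover `S` is lengthened either by inserting an outside vertex
adjacent to two consecutive vertices of `P`, or, when there is none, every outside vertex misses
at least half of `P`; then `P` has length below `2d`, and the second vertex of `P` can be replaced
by two new ones.
-/

open Finset

namespace SimpleGraph

variable {V : Type*} {G : SimpleGraph V}

namespace Walk

/-- The correction term for the start vertex is what makes the induction go through. -/
theorem length_add_ite_le_two_mul_countP_support (P : V → Prop) [DecidablePred P] :
    ∀ {u v : V} (p : G.Walk u v), (∀ d ∈ p.darts, P d.fst ∨ P d.snd) →
      p.length + (if P u then 1 else 0) ≤ 2 * p.support.countP P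
  | _, _, .nil, _ => by split_ifs <;> simp_all
  | u, _, .cons (v := w) h q, hP => by
    have ih := length_add_ite_le_two_mul_countP_support P q fun d hd => hP d (by simp [hd])
    have hfirst : P u ∨ P w := hP ⟨(u, w), h⟩ (by simp)
    simp only [length_cons, support_cons, List.countP_cons, decide_eq_true_eq]
    by_cases hu : P u <;> by_cases hw : P w <;> simp_all <;> omega

theorem length_le_two_mul_countP_support (P : V → Prop) [DecidablePred P] {u v : V}
    (p : G.Walk u v) (hP : ∀ d ∈ p.darts, P d.fst ∨ P d.snd) :
    p.length ≤ 2 * p.support.countP P :=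
  (Nat.le_add_right _ _).trans (p.length_add_ite_le_two_mul_countP_support P hP)

theorem IsPath.exists_insert_between {u v y : V} {p : G.Walk u v} (hp : p.IsPath)
    (hy : y ∉ p.support) {d : G.Dart} (hd : d ∈ p.darts) (h₁ : G.Adj d.fst y)
    (h₂ : G.Adj y d.snd) :
    ∃ q : G.Walk u v, q.IsPath ∧ q.length = p.length + 1 ∧ q.support ⊆ y :: p.support := by
  induction p with
  | nil => simp at hd
  | cons h p ih =>
    rw [cons_isPath_iff] at hp
    simp only [support_cons, List.mem_cons, not_or] at hy
    rw [darts_cons, List.mem_cons] at hd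
    rcases hd with rfl | hd
    · refine ⟨.cons h₁ (.cons h₂ p), ?_, by simp, by simp⟩
      simp only [cons_isPath_iff, support_cons, List.mem_cons, not_or]
      exact ⟨⟨hp.1, hy.2⟩, Ne.symm hy.1, hp.2⟩
    · obtain ⟨q, hq, hlen, hsupp⟩ := ih hp.1 hy.2 hd
      refine ⟨.cons h q, ?_, by simp [hlen], ?_⟩
      · rw [cons_isPath_iff]
        refine ⟨hq, fun hu => ?_⟩
        rcases List.mem_cons.mp (hsupp hu) with rfl | hu
        · exact hy.1 rfl
        · exact hp.2 hu
      · exact List.cons_subset.mpr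
          ⟨by simp, List.Subset.trans hsupp (List.cons_subset_cons _ (by simp))⟩

theorem IsPath.cons_cons_cons_of_cons_cons {u x₁ x₂ v y z : V} {h₀₁ : G.Adj u x₁}
    {h₁₂ : G.Adj x₁ x₂} {q : G.Walk x₂ v} (hp : (cons h₀₁ (cons h₁₂ q)).IsPath)
    (hy : y ∉ (cons h₀₁ (cons h₁₂ q)).support) (hz : z ∉ (cons h₀₁ (cons h₁₂ q)).support)
    (hyz : y ≠ z) (h₁ : G.Adj u y) (h₂ : G.Adj y z) (h₃ : G.Adj z x₂) :
    (cons h₁ (cons h₂ (cons h₃ q))).IsPath := by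
  simp only [cons_isPath_iff, support_cons, List.mem_cons, not_or] at hp hy hz ⊢
  exact ⟨⟨⟨hp.1.1, hz.2.2⟩, hyz, hy.2.2⟩, fun h => hy.1 h.symm, fun h => hz.1 h.symm, hp.2.2⟩

end Walk

variable [Fintype V] [DecidableEq V] [DecidableRel G.Adj]

theorem Walk.IsPath.length_le_two_mul_card_inter_compl_neighborFinset {u v y : V}
    {p : G.Walk u v} (hp : p.IsPath) (hy : y ∉ p.support)
    (hins : ∀ e ∈ p.darts, G.Adj e.fst y → ¬G.Adj y e.snd) :
    p.length ≤ 2 * #(p.support.toFinset ∩ Gᶜ.neighborFinset y) := by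
  calc p.length ≤ 2 * p.support.countP (¬G.Adj y ·) :=
        p.length_le_two_mul_countP_support _ fun e he => by
          have := hins e he
          rw [G.adj_comm] at this
          tauto
    _ = 2 * #(p.support.toFinset.filter (¬G.Adj y ·)) := by rw [hp.support_nodup.card_eq_countP]
    _ ≤ 2 * #(p.support.toFinset ∩ Gᶜ.neighborFinset y) := by
        gcongr
        intro x hx
        simp only [mem_filter, List.mem_toFinset] at hx
        simp only [mem_inter, List.mem_toFinset, mem_neighborFinset, compl_adj]
        exact ⟨hx.1, fun h => hy (h ▸ hx.1), hx.2⟩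

theorem exists_mem_notMem_adj_of_card_lt {S F : Finset V} {x : V} (hx : x ∈ F)
    (h : #(F ∪ S ∩ Gᶜ.neighborFinset x) < #S) : ∃ w ∈ S, w ∉ F ∧ G.Adj x w := by
  obtain ⟨w, hwS, hw⟩ := exists_mem_notMem_of_card_lt_card h
  simp only [mem_union, mem_inter, mem_neighborFinset, compl_adj, not_or, not_and, not_not] at hw
  exact ⟨w, hwS, hw.1, hw.2 hwS fun h => hw.1 (h ▸ hx)⟩

theorem exists_mem_notMem_adj_adj_of_card_lt {S F : Finset V} {x y : V} (hx : x ∈ F)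
    (hy : y ∈ F) (h : #(F ∪ S ∩ Gᶜ.neighborFinset x ∪ S ∩ Gᶜ.neighborFinset y) < #S) :
    ∃ w ∈ S, w ∉ F ∧ G.Adj x w ∧ G.Adj y w := by
  obtain ⟨w, hwS, hw⟩ := exists_mem_notMem_of_card_lt_card h
  simp only [mem_union, mem_inter, mem_neighborFinset, compl_adj, not_or, not_and, not_not] at hw
  exact ⟨w, hwS, hw.1.1, hw.1.2 hwS fun h => hw.1.1 (h ▸ hx), hw.2 hwS fun h => hw.1.1 (h ▸ hy)⟩

section

variable {S : Finset V} {d : ℕ}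

theorem exists_isPath_length_succ_of_forall_length_le
    (hS : ∀ x ∈ S, #(S ∩ Gᶜ.neighborFinset x) < d) (hd : 3 * d ≤ #S) {u v : V} {p : G.Walk u v}
    (hp : p.IsPath) (hpS : ∀ x ∈ p.support, x ∈ S) (h2 : 2 ≤ p.length)
    (hhalf : ∀ y ∈ S, y ∉ p.support →
      p.length ≤ 2 * #(p.support.toFinset ∩ Gᶜ.neighborFinset y))
    (hlt : p.length + 1 < #S) :
    ∃ q : G.Walk u v, q.IsPath ∧ q.length = p.length + 1 ∧ ∀ x ∈ q.support, x ∈ S := by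
  have hcard : #p.support.toFinset = p.length + 1 := by
    rw [List.toFinset_card_of_nodup hp.support_nodup, Walk.length_support]
  obtain ⟨y₀, hy₀S, hy₀⟩ := exists_mem_notMem_of_card_lt_card (hcard ▸ hlt)
  have hlen := hhalf y₀ hy₀S (by simpa using hy₀)
  have hy₀d : #(p.support.toFinset ∩ Gᶜ.neighborFinset y₀) < d :=
    (card_le_card (inter_subset_inter_right fun x hx => hpS x (List.mem_toFinset.mp hx))).trans_lt
      (hS y₀ hy₀S)
  cases p with
  | nil => simp at h2
  | cons h₀₁ p => cases p with
    | nil => simp at h2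
    | cons h₁₂ q =>
      rename_i x₁ x₂
      set F := (Walk.cons h₀₁ (.cons h₁₂ q)).support.toFinset
      obtain ⟨y, hyS, hyF, huy⟩ := exists_mem_notMem_adj_of_card_lt (G := G) (S := S) (F := F)
        (x := u) (by simp [F])
        ((card_union_le _ _).trans_lt (by have := hS u (hpS u (by simp)); omega))
      have hyF' := hhalf y hyS (by simpa [F] using hyF)
      -- `y` misses at least half of the path, so few of its non-neighbours lie outside it.
      obtain ⟨z, hzS, hzF, hyz, hx₂z⟩ := exists_mem_notMem_adj_adj_of_card_lt (G := G) (S := S)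
        (F := insert y F) (x := y) (y := x₂) (mem_insert_self _ _) (by simp [F]) (by
          have h₁ :=
            card_union_le (insert y F ∪ S ∩ Gᶜ.neighborFinset y) (S ∩ Gᶜ.neighborFinset x₂)
          have h₂ := card_union_add_card_inter (insert y F) (S ∩ Gᶜ.neighborFinset y)
          have h₃ : #(F ∩ Gᶜ.neighborFinset y) ≤ #(insert y F ∩ (S ∩ Gᶜ.neighborFinset y)) :=
            card_le_card fun x hx => by
              simp only [F, mem_inter, mem_insert, List.mem_toFinset] at hx ⊢
              exact ⟨Or.inr hx.1, hpS x hx.1, hx.2⟩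
          have h₄ := card_insert_of_notMem hyF
          have h₅ := hS y hyS
          have h₆ := hS x₂ (hpS x₂ (by simp))
          omega)
      refine ⟨.cons huy (.cons hyz (.cons hx₂z.symm q)), ?_, by simp, ?_⟩
      · simp only [F, mem_insert, List.mem_toFinset, not_or] at hyF hzF
        exact hp.cons_cons_cons_of_cons_cons hyF hzF.2 (Ne.symm hzF.1) huy hyz hx₂z.symm
      · simp only [Walk.support_cons, List.mem_cons]
        rintro x (rfl | rfl | rfl | hx)
        exacts [hpS x (by simp), hyS, hzS, hpS x (by simp [hx])]

theorem exists_isPath_length_succ (hS : ∀ x ∈ S, #(S ∩ Gᶜ.neighborFinset x) < d)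
    (hd : 3 * d ≤ #S) {u v : V} {p : G.Walk u v} (hp : p.IsPath) (hpS : ∀ x ∈ p.support, x ∈ S)
    (h2 : 2 ≤ p.length) (hlt : p.length + 1 < #S) :
    ∃ q : G.Walk u v, q.IsPath ∧ q.length = p.length + 1 ∧ ∀ x ∈ q.support, x ∈ S := by
  by_cases hins : ∃ y ∈ S, y ∉ p.support ∧ ∃ e ∈ p.darts, G.Adj e.fst y ∧ G.Adj y e.snd
  · obtain ⟨y, hyS, hy, e, he, h₁, h₂⟩ := hins
    obtain ⟨q, hq, hlen, hsupp⟩ := hp.exists_insert_between hy he h₁ h₂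
    refine ⟨q, hq, hlen, fun x hx => ?_⟩
    rcases List.mem_cons.mp (hsupp hx) with rfl | hx
    exacts [hyS, hpS x hx]
  · push Not at hins
    exact exists_isPath_length_succ_of_forall_length_le hS hd hp hpS h2
      (fun y hyS hy => hp.length_le_two_mul_card_inter_compl_neighborFinset hy (hins y hyS hy)) hlt

theorem exists_isPath_length_two (hS : ∀ x ∈ S, #(S ∩ Gᶜ.neighborFinset x) < d)
    (hd : 3 * d ≤ #S) {u v : V} (hu : u ∈ S) (hv : v ∈ S) (huv : u ≠ v) :
    ∃ p : G.Walk u v, p.IsPath ∧ p.length = 2 ∧ ∀ x ∈ p.support, x ∈ S := by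
  obtain ⟨w, hwS, hw, huw, hvw⟩ := exists_mem_notMem_adj_adj_of_card_lt (G := G) (S := S)
    (F := {u, v}) (x := u) (y := v) (by simp) (by simp) (by
      have h₁ := card_union_le ({u, v} ∪ S ∩ Gᶜ.neighborFinset u) (S ∩ Gᶜ.neighborFinset v)
      have h₂ := card_union_le {u, v} (S ∩ Gᶜ.neighborFinset u)
      have h₃ := card_le_two (a := u) (b := v)
      have h₄ := hS u hu
      have h₅ := hS v hv
      omega)
  simp only [mem_insert, mem_singleton, not_or] at hw
  refine ⟨.cons huw (.cons hvw.symm .nil), ?_, rfl, ?_⟩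
  · simp [Walk.cons_isPath_iff, huv, hw.2, Ne.symm hw.1]
  · simp only [Walk.support_cons, Walk.support_nil, List.mem_cons, List.not_mem_nil, or_false]
    rintro x (rfl | rfl | rfl)
    exacts [hu, hwS, hv]

def IsPanconnectedOn (G : SimpleGraph V) (S : Finset V) : Prop :=
  ∀ u ∈ S, ∀ v ∈ S, u ≠ v → ∀ ℓ : ℕ, 2 ≤ ℓ → ℓ ≤ #S - 1 →
    ∃ p : G.Walk u v, p.IsPath ∧ p.length = ℓ ∧ ∀ x ∈ p.support, x ∈ S

theorem isPanconnectedOn_of_card_inter_compl_neighborFinset_lt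
    (hS : ∀ x ∈ S, #(S ∩ Gᶜ.neighborFinset x) < d) (hd : 3 * d ≤ #S) :
    G.IsPanconnectedOn S := by
  intro u hu v hv huv ℓ h2 hℓ
  induction ℓ, h2 using Nat.le_induction with
  | base => exact exists_isPath_length_two hS hd hu hv huv
  | succ ℓ h2 ih =>
    obtain ⟨p, hp, rfl, hpS⟩ := ih (by omega)
    exact exists_isPath_length_succ hS hd hp hpS h2 (by omega)

end

theorem degree_compl_lt_of_card_le_degree_add {a x : V}
    (h : Fintype.card V ≤ G.degree a + G.degree x) : Gᶜ.degree x < G.degree a := by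
  have := G.degree_lt_card_verts x
  rw [degree_compl]
  omega

end SimpleGraph

open SimpleGraph in
theorem subsets_of_B_panconnected_general {V : Type*} [Fintype V] [DecidableEq V]
    (G : SimpleGraph V) [DecidableRel G.Adj] (k nk : ℕ) (hk : 1 ≤ k)
    (hσ : ∀ u v : V, u ≠ v → ¬G.Adj u v →
      Fintype.card V + k - 1 ≤ G.degree u + G.degree v)
    (hδ : 8 * G.minDegree ≤ nk)
    (a : V) (ha : G.degree a = G.minDegree)
    (B : Finset V) (hB : B = Finset.univ \ insert a (G.neighborFinset a)) :
    ∀ S : Finset V, S ⊆ B → 3 * nk ≤ 8 * S.card →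
      ∀ u ∈ S, ∀ v ∈ S, u ≠ v → ∀ ℓ : ℕ, 2 ≤ ℓ → ℓ ≤ S.card - 1 →
        ∃ p : G.Walk u v, p.IsPath ∧ p.length = ℓ ∧ ∀ x ∈ p.support, x ∈ S := by
  intro S hSB hS
  refine isPanconnectedOn_of_card_inter_compl_neighborFinset_lt (d := G.minDegree)
    (fun x hx => ?_) (by omega)
  have hxB := hSB hx
  simp only [hB, mem_sdiff, mem_univ, mem_insert, mem_neighborFinset, not_or, true_and] at hxB
  have hσax := hσ a x (Ne.symm hxB.1) hxB.2
  calc #(S ∩ Gᶜ.neighborFinset x) ≤ Gᶜ.degree x := card_le_card inter_subset_right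
    _ < G.degree a := degree_compl_lt_of_card_le_degree_add (by omega)
    _ = G.minDegree := ha

/-- With `σ₂(G) ≥ n + k - 1` and `δ(G) ≤ n_k / 8`, every induced subgraph of
`G[B]` on at least `3 n_k / 8` vertices is panconnected, where
`B = V(G) \ ({a} ∪ N(a))` for a vertex `a` of minimum degree. -/
theorem subsets_of_B_panconnected {V : Type*} [Fintype V] [DecidableEq V] [Nonempty V]
    (G : SimpleGraph V) [DecidableRel G.Adj] (k nk : ℕ) (hk : 1 ≤ k)
    (hnk : nk ≤ Fintype.card V)
    (hσ : ∀ u v : V, u ≠ v → ¬G.Adj u v →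
      Fintype.card V + k - 1 ≤ G.degree u + G.degree v)
    (hδ : 8 * G.minDegree ≤ nk)
    (a : V) (ha : G.degree a = G.minDegree)
    (B : Finset V) (hB : B = Finset.univ \ insert a (G.neighborFinset a)) :
    ∀ S : Finset V, S ⊆ B → 3 * nk ≤ 8 * S.card →
      ∀ u ∈ S, ∀ v ∈ S, u ≠ v → ∀ ℓ : ℕ, 2 ≤ ℓ → ℓ ≤ S.card - 1 →
        ∃ p : G.Walk u v, p.IsPath ∧ p.length = ℓ ∧ ∀ x ∈ p.support, x ∈ S :=
  subsets_of_B_panconnected_general G k nk hk hσ hδ a ha B hB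
end
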